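/- arXiv:2006.05626 — 3 statements merged into one kernel-verified Lean document; each statement's English description precedes it below -/
import Mathlib

section
/- Let d ≥ 1 and m ≥ 2 be integers, let C > 0, and let x_1, …, x_N ∈ ℝ^d satisfy ‖x_n‖₂ ≤ C/2 for all n = 1, …, N. Then E_σ[ sup_{w ∈ ℝ^d, ‖w‖₂ ≤ 1; b ∈ ℝ, |b| ≤ C/2} Σ_{n=1}^N σ_n (⟨w, x_n⟩ − b)^{m−1} ] ≤ √N · C^{m−1}, where the expectation is over σ uniformly distributed on {−1,1}^N (equivalently, 2^{−N} times the sum over all σ ∈ {−1,1}^N). -/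
/-!
With `W = (w, 2b/C)` and `y_n = (x_n, -C/2)` in `ℝ^(d+1)` one has `⟪w, x_n⟫ - b = ⟪W, y_n⟫`,
`‖W‖ ≤ √2` and `‖y_n‖ ≤ C/√2`. Since `⟪W, y⟫^p = ⟪W^⊗p, y^⊗p⟫`, Cauchy–Schwarz bounds the signed
sum by `‖W‖^p ‖∑ σ_n y_n^⊗p‖` uniformly in `(w, b)`, which removes the supremum. Finally, Rademacher
signs are orthogonal, so `E ‖∑ σ_n z_n‖ ≤ (E ‖∑ σ_n z_n‖²)^(1/2) = (∑ ‖z_n‖²)^(1/2) ≤ √N max ‖z_n‖`.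
-/

open scoped InnerProductSpace

namespace EuclideanSpace

variable {ι : Type*} [Fintype ι]

noncomputable def tensorPow (p : ℕ) (v : EuclideanSpace ℝ ι) : EuclideanSpace ℝ (Fin p → ι) :=
  WithLp.toLp 2 fun t => ∏ j, v (t j)

theorem inner_tensorPow (p : ℕ) (u v : EuclideanSpace ℝ ι) :
    ⟪tensorPow p u, tensorPow p v⟫_ℝ = ⟪u, v⟫_ℝ ^ p := by
  simp only [PiLp.inner_apply, tensorPow, RCLike.inner_apply, conj_trivial, Fintype.sum_pow,
    ← Finset.prod_mul_distrib]

theorem norm_tensorPow (p : ℕ) (v : EuclideanSpace ℝ ι) : ‖tensorPow p v‖ = ‖v‖ ^ p := by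
  have h := inner_tensorPow p v v
  rw [real_inner_self_eq_norm_sq, real_inner_self_eq_norm_sq, ← pow_mul, mul_comm, pow_mul] at h
  exact (pow_left_inj₀ (norm_nonneg _) (by positivity) two_ne_zero).mp h

theorem sum_mul_inner_pow_le {κ : Type*} [Fintype κ] (ε : κ → ℝ) (w : EuclideanSpace ℝ ι)
    (y : κ → EuclideanSpace ℝ ι) (p : ℕ) :
    ∑ n, ε n * ⟪w, y n⟫_ℝ ^ p ≤ ‖w‖ ^ p * ‖∑ n, ε n • tensorPow p (y n)‖ := by
  calc ∑ n, ε n * ⟪w, y n⟫_ℝ ^ p = ⟪tensorPow p w, ∑ n, ε n • tensorPow p (y n)⟫_ℝ := by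
        simp only [inner_sum, real_inner_smul_right, inner_tensorPow]
    _ ≤ ‖w‖ ^ p * ‖∑ n, ε n • tensorPow p (y n)‖ := by
        simpa only [norm_tensorPow] using real_inner_le_norm (tensorPow p w) _

noncomputable def augment (v : EuclideanSpace ℝ ι) (a : ℝ) : EuclideanSpace ℝ (Option ι) :=
  WithLp.toLp 2 fun i => i.elim a v

theorem inner_augment (u v : EuclideanSpace ℝ ι) (a b : ℝ) :
    ⟪augment u a, augment v b⟫_ℝ = ⟪u, v⟫_ℝ + a * b := by
  simp [augment, PiLp.inner_apply, Fintype.sum_option, mul_comm, add_comm]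

theorem norm_augment (v : EuclideanSpace ℝ ι) (a : ℝ) :
    ‖augment v a‖ = √(‖v‖ ^ 2 + a ^ 2) := by
  rw [← Real.sqrt_sq (norm_nonneg (augment v a)), ← real_inner_self_eq_norm_sq (augment v a),
    inner_augment, real_inner_self_eq_norm_sq, ← sq]

theorem norm_augment_le {v : EuclideanSpace ℝ ι} {a c : ℝ} (hv : ‖v‖ ≤ c) (ha : |a| ≤ c) :
    ‖augment v a‖ ≤ √2 * c := by
  have hv2 := pow_le_pow_left₀ (norm_nonneg v) hv 2
  have ha2 := pow_le_pow_left₀ (abs_nonneg a) ha 2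
  rw [sq_abs] at ha2
  rw [norm_augment, ← Real.sqrt_sq ((norm_nonneg v).trans hv), ← Real.sqrt_mul zero_le_two]
  gcongr
  linarith

end EuclideanSpace

section Rademacher

variable {ι : Type*} [Fintype ι] [DecidableEq ι]

theorem sum_sign_mul_sign (i j : ι) :
    ∑ σ : ι → Bool, (if σ i then (1 : ℝ) else -1) * (if σ j then 1 else -1) =
      if i = j then 2 ^ Fintype.card ι else 0 := by
  split_ifs with hij
  · subst hij
    simp [apply_ite (fun r : ℝ => r * r)]
  · set f : (ι → Bool) → ℝ := fun σ => (if σ i then 1 else -1) * (if σ j then 1 else -1)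
    have hflip : Function.Involutive fun σ : ι → Bool => Function.update σ i (!σ i) :=
      fun σ => by simp
    have hneg : ∀ σ, f σ = -f (Function.update σ i (!σ i)) := fun σ => by
      cases hi : σ i <;> cases hj : σ j <;> simp [f, hi, hj, Function.update_of_ne (Ne.symm hij)]
    have := Fintype.sum_equiv hflip.toPerm f (fun σ => -f σ) hneg
    rw [Finset.sum_neg_distrib] at this
    linarith

variable {E : Type*} [NormedAddCommGroup E] [InnerProductSpace ℝ E]

theorem sum_norm_sq_sign_smul_sum (z : ι → E) :
    ∑ σ : ι → Bool, ‖∑ i, (if σ i then (1 : ℝ) else -1) • z i‖ ^ 2 =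
      2 ^ Fintype.card ι * ∑ i, ‖z i‖ ^ 2 := by
  calc ∑ σ : ι → Bool, ‖∑ i, (if σ i then (1 : ℝ) else -1) • z i‖ ^ 2
      = ∑ σ : ι → Bool, ∑ i, ∑ j,
          ((if σ i then (1 : ℝ) else -1) * (if σ j then 1 else -1)) * ⟪z j, z i⟫_ℝ := by
        simp only [← real_inner_self_eq_norm_sq, sum_inner, inner_sum, real_inner_smul_left,
          real_inner_smul_right, mul_assoc]
    _ = ∑ i, ∑ j, (∑ σ : ι → Bool,
          (if σ i then (1 : ℝ) else -1) * (if σ j then 1 else -1)) * ⟪z j, z i⟫_ℝ := by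
        simp only [Finset.sum_mul]
        rw [Finset.sum_comm]
        exact Finset.sum_congr rfl fun i _ => Finset.sum_comm
    _ = 2 ^ Fintype.card ι * ∑ i, ‖z i‖ ^ 2 := by
        simp_rw [sum_sign_mul_sign]
        simp [Finset.mul_sum]

theorem sum_norm_sign_smul_sum_le (z : ι → E) :
    (2 ^ Fintype.card ι : ℝ)⁻¹ * ∑ σ : ι → Bool, ‖∑ i, (if σ i then (1 : ℝ) else -1) • z i‖ ≤
      √(∑ i, ‖z i‖ ^ 2) := by
  have h := Real.sum_mul_le_sqrt_mul_sqrt Finset.univ (fun _ => 1)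
    fun σ : ι → Bool => ‖∑ i, (if σ i then (1 : ℝ) else -1) • z i‖
  simp only [one_pow, one_mul, Finset.sum_const, Finset.card_univ, nsmul_eq_mul, mul_one,
    sum_norm_sq_sign_smul_sum, Fintype.card_fun, Fintype.card_bool, Nat.cast_pow,
    Nat.cast_ofNat] at h
  rwa [Real.sqrt_mul (by positivity), ← mul_assoc, Real.mul_self_sqrt (by positivity),
    ← inv_mul_le_iff₀ (by positivity)] at h

end Rademacher

open EuclideanSpace

theorem sSup_sum_mul_inner_sub_pow_le {ι κ : Type*} [Fintype ι] [Fintype κ] (ε : κ → ℝ)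
    (x : κ → EuclideanSpace ℝ ι) {C : ℝ} (hC : 0 < C) (p : ℕ) :
    sSup {r : ℝ | ∃ (w : EuclideanSpace ℝ ι) (b : ℝ), ‖w‖ ≤ 1 ∧ |b| ≤ C / 2 ∧
        r = ∑ n, ε n * (⟪w, x n⟫_ℝ - b) ^ p} ≤
      √2 ^ p * ‖∑ n, ε n • tensorPow p (augment (x n) (-(C / 2)))‖ := by
  refine Real.sSup_le ?_ (by positivity)
  rintro r ⟨w, b, hw, hb, rfl⟩
  have hinner : ∀ n, ⟪w, x n⟫_ℝ - b = ⟪augment w (2 * b / C), augment (x n) (-(C / 2))⟫_ℝ :=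
    fun n => by rw [inner_augment]; field_simp; ring
  have hb' : |2 * b / C| ≤ 1 := by
    rw [abs_div, abs_mul, abs_two, abs_of_pos hC, div_le_one hC]
    linarith
  simp_rw [hinner]
  refine (sum_mul_inner_pow_le _ _ _ p).trans ?_
  gcongr
  simpa using norm_augment_le hw hb'

theorem expected_sup_bound_general (d m N : ℕ) (C : ℝ) (hC : 0 < C)
    (x : Fin N → EuclideanSpace ℝ (Fin d)) (hx : ∀ n, ‖x n‖ ≤ C / 2) :
    ((2 : ℝ) ^ N)⁻¹ * ∑ σ : Fin N → Bool,
      sSup {r : ℝ | ∃ (w : EuclideanSpace ℝ (Fin d)) (b : ℝ), ‖w‖ ≤ 1 ∧ |b| ≤ C / 2 ∧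
        r = ∑ n, (if σ n then (1 : ℝ) else -1) * (⟪w, x n⟫_ℝ - b) ^ (m - 1)}
      ≤ Real.sqrt N * C ^ (m - 1) := by
  set p := m - 1
  set z : Fin N → EuclideanSpace ℝ (Fin p → Option (Fin d)) :=
    fun n => tensorPow p (augment (x n) (-(C / 2)))
  have hz : ∀ n, ‖z n‖ ≤ (√2 * (C / 2)) ^ p := fun n => by
    rw [norm_tensorPow]
    gcongr
    exact norm_augment_le (hx n) (by rw [abs_neg, abs_of_pos (by positivity)])
  calc _ ≤ ((2 : ℝ) ^ N)⁻¹ * ∑ σ : Fin N → Bool,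
          √2 ^ p * ‖∑ n, (if σ n then (1 : ℝ) else -1) • z n‖ := by
        gcongr with σ
        exact sSup_sum_mul_inner_sub_pow_le _ x hC p
    _ = √2 ^ p * (((2 : ℝ) ^ N)⁻¹ * ∑ σ : Fin N → Bool,
          ‖∑ n, (if σ n then (1 : ℝ) else -1) • z n‖) := by
        rw [← Finset.mul_sum]; ring
    _ ≤ √2 ^ p * √(∑ n, ‖z n‖ ^ 2) := by
        gcongr; simpa using sum_norm_sign_smul_sum_le z
    _ ≤ √2 ^ p * √(∑ _n : Fin N, ((√2 * (C / 2)) ^ p) ^ 2) := by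
        gcongr with n; exact hz n
    _ = √N * C ^ p := by
        rw [Finset.sum_const, Finset.card_univ, Fintype.card_fin, nsmul_eq_mul,
          Real.sqrt_mul (Nat.cast_nonneg N), Real.sqrt_sq (by positivity), mul_left_comm,
          ← mul_pow, ← mul_assoc, Real.mul_self_sqrt zero_le_two, mul_div_cancel₀ _ two_ne_zero]

theorem expected_sup_bound (d m N : ℕ) (hd : 1 ≤ d) (hm : 2 ≤ m) (C : ℝ) (hC : 0 < C)
    (x : Fin N → EuclideanSpace ℝ (Fin d)) (hx : ∀ n, ‖x n‖ ≤ C / 2) :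
    ((2 : ℝ) ^ N)⁻¹ * ∑ σ : Fin N → Bool,
      sSup {r : ℝ | ∃ (w : EuclideanSpace ℝ (Fin d)) (b : ℝ), ‖w‖ ≤ 1 ∧ |b| ≤ C / 2 ∧
        r = ∑ n, (if σ n then (1 : ℝ) else -1) * (⟪w, x n⟫_ℝ - b) ^ (m - 1)}
      ≤ Real.sqrt N * C ^ (m - 1) :=
  expected_sup_bound_general d m N C hC x hx
end

section
/- Let d ≥ 1 and m ≥ 2 be integers. For any K ∈ ℕ, any parameters v_k ∈ ℝ, w_k ∈ ℝ^d, b_k ∈ ℝ (k = 1, …, K), and any polynomial c : ℝ^d → ℝ of total degree strictly less than m, there exist parameters v'_k ∈ ℝ, w'_k ∈ ℝ^d, b'_k ∈ ℝ (k = 1, …, K) and a polynomial c' : ℝ^d → ℝ of total degree strictly less than m such that: (i) Σ_{k=1}^K v'_k ρ_m(⟨w'_k, x⟩ − b'_k) + c'(x) = Σ_{k=1}^K v_k ρ_m(⟨w_k, x⟩ − b_k) + c(x) for all x ∈ ℝ^d; (ii) |v'_k| = ‖w'_k‖₂^{m−1} for every k; and (iii) Σ_{k=1}^K |v'_k| ‖w'_k‖₂^{m−1}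 = Σ_{k=1}^K |v_k| ‖w_k‖₂^{m−1}, so that in particular (1/2) Σ_{k=1}^K (|v'_k|² + ‖w'_k‖₂^{2m−2}) = Σ_{k=1}^K |v_k| ‖w_k‖₂^{m−1}. -/
open scoped InnerProductSpace BigOperators

/-- The `m`-th order truncated power function `ρ_m(t) = (max 0 t)^(m-1) / (m-1)!`. -/
noncomputable def truncPow (m : ℕ) (t : ℝ) : ℝ :=
  (max 0 t) ^ (m - 1) / (Nat.factorial (m - 1))

/-!
`ρ_m` is positively homogeneous of degree `m - 1`, so a neuron `(v, w, b)` computes the same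
function as `(v / r ^ (m - 1), r • w, r * b)` for every `r > 0`, while `|v| ‖w‖ ^ (m - 1)` is
unchanged; choosing `r ^ (2 (m - 1)) = |v| / ‖w‖ ^ (m - 1)` balances the neuron. A neuron with
`v = 0` or `w = 0` is constant and is moved into the polynomial term.
-/

theorem truncPow_mul_of_nonneg (m : ℕ) {r : ℝ} (hr : 0 ≤ r) (t : ℝ) :
    truncPow m (r * t) = r ^ (m - 1) * truncPow m t := by
  rw [truncPow, truncPow, ← mul_zero r, ← mul_max_of_nonneg _ _ hr, mul_zero, mul_pow,
    mul_div_assoc]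

section Neuron

variable {E : Type*} [NormedAddCommGroup E] [InnerProductSpace ℝ E]

theorem div_pow_mul_truncPow_inner_smul_sub (m : ℕ) {r : ℝ} (hr : 0 < r) (v : ℝ) (w x : E)
    (b : ℝ) :
    v / r ^ (m - 1) * truncPow m (⟪r • w, x⟫_ℝ - r * b) = v * truncPow m (⟪w, x⟫_ℝ - b) := by
  rw [real_inner_smul_left, ← mul_sub, truncPow_mul_of_nonneg m hr.le]
  field_simp

theorem exists_balanced_neuron (m : ℕ) (hm : 2 ≤ m) (v : ℝ) (w : E) (b : ℝ) :
    ∃ (v' : ℝ) (w' : E) (b' s : ℝ),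
      (∀ x : E, v' * truncPow m (⟪w', x⟫_ℝ - b') + s = v * truncPow m (⟪w, x⟫_ℝ - b)) ∧
      |v'| = ‖w'‖ ^ (m - 1) ∧ |v'| * ‖w'‖ ^ (m - 1) = |v| * ‖w‖ ^ (m - 1) := by
  have hn : m - 1 ≠ 0 := by omega
  by_cases hvw : v = 0 ∨ w = 0
  · refine ⟨0, 0, 0, v * truncPow m (-b), fun x => ?_, by simp [hn], ?_⟩
    · rcases hvw with rfl | rfl <;> simp
    · rcases hvw with rfl | rfl <;> simp [hn]
  push Not at hvw
  obtain ⟨hv, hw⟩ := hvw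
  have hwn : 0 < ‖w‖ ^ (m - 1) := pow_pos (norm_pos_iff.2 hw) _
  have hq : 0 < |v| / ‖w‖ ^ (m - 1) := div_pos (abs_pos.2 hv) hwn
  set r := (|v| / ‖w‖ ^ (m - 1)) ^ ((2 * (m - 1) : ℕ)⁻¹ : ℝ)
  have hr : 0 < r := Real.rpow_pos_of_pos hq _
  have hr2 : r ^ (m - 1) * r ^ (m - 1) = |v| / ‖w‖ ^ (m - 1) := by
    rw [← pow_add, ← two_mul, Real.rpow_inv_natCast_pow hq.le (by omega)]
  have hrn : 0 < r ^ (m - 1) := pow_pos hr _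
  refine ⟨v / r ^ (m - 1), r • w, r * b, 0, fun x => ?_, ?_, ?_⟩
  · rw [add_zero, div_pow_mul_truncPow_inner_smul_sub m hr]
  · rw [abs_div, abs_of_pos hrn, norm_smul, Real.norm_of_nonneg hr.le, mul_pow,
      div_eq_iff hrn.ne', mul_right_comm, hr2, div_mul_cancel₀ _ hwn.ne']
  · rw [abs_div, abs_of_pos hrn, norm_smul, Real.norm_of_nonneg hr.le, mul_pow]
    field_simp

end Neuron

theorem network_rebalancing_general (d m K : ℕ) (hm : 2 ≤ m)
    (v : Fin K → ℝ) (w : Fin K → EuclideanSpace ℝ (Fin d)) (b : Fin K → ℝ)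
    (c : MvPolynomial (Fin d) ℝ) (hc : c.totalDegree < m) :
    ∃ (v' : Fin K → ℝ) (w' : Fin K → EuclideanSpace ℝ (Fin d)) (b' : Fin K → ℝ)
      (c' : MvPolynomial (Fin d) ℝ),
      c'.totalDegree < m ∧
      (∀ x : EuclideanSpace ℝ (Fin d),
        (∑ k, v' k * truncPow m (⟪w' k, x⟫_ℝ - b' k)) + MvPolynomial.eval x c' =
          (∑ k, v k * truncPow m (⟪w k, x⟫_ℝ - b k)) + MvPolynomial.eval x c) ∧
      (∀ k, |v' k| = ‖w' k‖ ^ (m - 1)) ∧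
      (∑ k, |v' k| * ‖w' k‖ ^ (m - 1)) = (∑ k, |v k| * ‖w k‖ ^ (m - 1)) ∧
      (1 / 2 : ℝ) * (∑ k, (|v' k| ^ 2 + ‖w' k‖ ^ (2 * m - 2)))
        = ∑ k, |v k| * ‖w k‖ ^ (m - 1) := by
  choose v' w' b' s hfun hbal hcost using fun k => exists_balanced_neuron m hm (v k) (w k) (b k)
  have hdeg : (c + MvPolynomial.C (∑ k, s k)).totalDegree < m :=
    (MvPolynomial.totalDegree_add _ _).trans_lt
      (max_lt hc (by rw [MvPolynomial.totalDegree_C]; omega))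
  have hsum : ∑ k, |v' k| * ‖w' k‖ ^ (m - 1) = ∑ k, |v k| * ‖w k‖ ^ (m - 1) :=
    Finset.sum_congr rfl fun k _ => hcost k
  refine ⟨v', w', b', c + MvPolynomial.C (∑ k, s k), hdeg, fun x => ?_, hbal, hsum, ?_⟩
  · rw [map_add, MvPolynomial.eval_C, ← add_assoc, add_right_comm, ← Finset.sum_add_distrib]
    simp only [hfun]
  · rw [← hsum, Finset.mul_sum]
    refine Finset.sum_congr rfl fun k _ => ?_
    rw [show 2 * m - 2 = (m - 1) * 2 by omega, pow_mul, ← hbal k]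
    ring

theorem network_rebalancing (d m K : ℕ) (hd : 1 ≤ d) (hm : 2 ≤ m)
    (v : Fin K → ℝ) (w : Fin K → EuclideanSpace ℝ (Fin d)) (b : Fin K → ℝ)
    (c : MvPolynomial (Fin d) ℝ) (hc : c.totalDegree < m) :
    ∃ (v' : Fin K → ℝ) (w' : Fin K → EuclideanSpace ℝ (Fin d)) (b' : Fin K → ℝ)
      (c' : MvPolynomial (Fin d) ℝ),
      c'.totalDegree < m ∧
      (∀ x : EuclideanSpace ℝ (Fin d),
        (∑ k, v' k * truncPow m (⟪w' k, x⟫_ℝ - b' k)) + MvPolynomial.eval x c' =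
          (∑ k, v k * truncPow m (⟪w k, x⟫_ℝ - b k)) + MvPolynomial.eval x c) ∧
      (∀ k, |v' k| = ‖w' k‖ ^ (m - 1)) ∧
      (∑ k, |v' k| * ‖w' k‖ ^ (m - 1)) = (∑ k, |v k| * ‖w k‖ ^ (m - 1)) ∧
      (1 / 2 : ℝ) * (∑ k, (|v' k| ^ 2 + ‖w' k‖ ^ (2 * m - 2)))
        = ∑ k, |v k| * ‖w k‖ ^ (m - 1) :=
  network_rebalancing_general d m K hm v w b c hc
end

section
/- Let V be a real vector space, let ν : V → ℝ^N be a linear map, let G : ℝ^N → ℝ be strictly convex, and let S : V → [0, ∞) be a seminorm. If f₁ and f₂ are both global minimizers over V of the objective f ↦ G(ν f) + S(f), then ν f₁ = ν f₂. Consequently, every global minimizer f̄ of this objective is also a minimizer of S(f) over the set {f ∈ V : ν f = ν f̄}. -/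
theorem strictly_convex_data_fit_reduction {V : Type*} [AddCommGroup V] [Module ℝ V]
    {N : ℕ} (ν : V →ₗ[ℝ] (Fin N → ℝ)) (G : (Fin N → ℝ) → ℝ)
    (hG : StrictConvexOn ℝ Set.univ G) (S : Seminorm ℝ V) :
    (∀ f₁ f₂ : V,
      (∀ f : V, G (ν f₁) + S f₁ ≤ G (ν f) + S f) →
      (∀ f : V, G (ν f₂) + S f₂ ≤ G (ν f) + S f) →
      ν f₁ = ν f₂) ∧
    (∀ fbar : V, (∀ f : V, G (ν fbar) + S fbar ≤ G (ν f) + S f) →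
      ∀ f : V, ν f = ν fbar → S fbar ≤ S f) := by
  constructor
  · intro f₁ f₂ h₁ h₂
    by_contra hne
    set f := (1/2 : ℝ) • f₁ + (1/2 : ℝ) • f₂ with hf
    have hν : ν f = (1/2 : ℝ) • ν f₁ + (1/2 : ℝ) • ν f₂ := by
      simp [hf, map_add, map_smul]
    have hGlt : G (ν f) < (1/2 : ℝ) * G (ν f₁) + (1/2 : ℝ) * G (ν f₂) := by
      rw [hν]
      exact hG.2 (Set.mem_univ _) (Set.mem_univ _) hne (by norm_num) (by norm_num)
        (by norm_num)
    have hS : (S f : ℝ) ≤ (1/2 : ℝ) * S f₁ + (1/2 : ℝ) * S f₂ := by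
      calc (S f : ℝ) ≤ S ((1/2 : ℝ) • f₁) + S ((1/2 : ℝ) • f₂) := map_add_le_add S _ _
        _ = (1/2 : ℝ) * S f₁ + (1/2 : ℝ) * S f₂ := by
            rw [map_smul_eq_mul, map_smul_eq_mul]; norm_num
    have e12 : G (ν f₁) + S f₁ = G (ν f₂) + S f₂ :=
      le_antisymm (h₁ f₂) (h₂ f₁)
    have := h₁ f
    nlinarith [this, hGlt, hS, e12]
  · intro fbar hmin f hνf
    have := hmin f
    rw [hνf] at this
    linarith
end
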